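/- arXiv:2212.02275 — 3 statements merged into one kernel-verified Lean document; each statement's English description precedes it below -/
import Mathlib

section
/- Let G and H be metrizable topological groups with completions Ĝ and Ĥ, and let f : G → H be a strict continuous homomorphism (i.e. the induced map G/ker f → im f is a topological isomorphism). Then the unique continuous extension f̂ : Ĝ → Ĥ is strict, with kernel equal to the closure of ker f and image equal to the closure of im f. -/
/-! Strictness says that small elements of `im f` have small preimages. Given a Cauchy sequence
`f (u n)` in `H`, one may therefore pass to a subsequence and correct each `u n` by an element of
`ker f` so that consecutive differences lie in a halving basis `V (n + 1) + V (n + 1) ⊆ V n` of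
neighbourhoods of `0` in `G`, which exists because `G` is first countable. The corrected sequence
is Cauchy, stays within `V 0` of its first term, and converges in `Ĝ` to a preimage of the limit.
This gives the image of `f̂`, and, applied to sequences starting near `0`, shows that `f̂` is open
onto its image at `0`, hence everywhere by translation. For the kernel: if `f̂ x = 0` and `g ∈ G`
is close to `x`, then `f g` is small, so `f g = f u` with `u` small, and `g - u ∈ ker f` is close
to `x`. -/

open UniformSpace

/-- A homomorphism of topological groups is *strict* if it is continuous and open onto its
image, i.e. the induced map `G/ker f → im f` is a topological isomorphism. -/
def IsStrictHom {G H : Type*} [TopologicalSpace G] [TopologicalSpace H] (f : G → H) : Prop :=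
  Continuous f ∧ ∀ U : Set G, IsOpen U → ∃ V : Set H, IsOpen V ∧ V ∩ Set.range f = f '' U

open Filter Topology Set Pointwise

section StrictHom

variable {A B : Type*} [AddGroup A] [TopologicalSpace A] [ContinuousAdd A]
  [AddGroup B] [TopologicalSpace B] [ContinuousAdd B]

theorem isStrictHom_iff_nhds_zero (φ : A →+ B) :
    IsStrictHom φ ↔
      Continuous φ ∧ ∀ U ∈ 𝓝 (0 : A), ∃ V ∈ 𝓝 (0 : B), V ∩ range φ ⊆ φ '' U := by
  refine and_congr_right fun _ => ⟨fun h U hU => ?_, fun h U hU => ?_⟩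
  · obtain ⟨V, hV, hVU⟩ := h (interior U) isOpen_interior
    have h0 : (0 : B) ∈ V ∩ range φ := by
      rw [hVU, ← map_zero φ]
      exact mem_image_of_mem _ (mem_interior_iff_mem_nhds.2 hU)
    exact ⟨V, hV.mem_nhds h0.1, hVU.trans_subset (image_mono interior_subset)⟩
  · have hU' : ∀ x ∈ U, (x + ·) ⁻¹' U ∈ 𝓝 (0 : A) := fun x hx =>
      (continuous_const.add continuous_id).continuousAt.preimage_mem_nhds
        (by simpa using hU.mem_nhds hx)
    choose! N hN hNU using fun x hx => h _ (hU' x hx)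
    refine ⟨⋃ x ∈ U, (-φ x + ·) ⁻¹' interior (N x),
      isOpen_biUnion fun x _ => isOpen_interior.preimage (continuous_const.add continuous_id),
      subset_antisymm ?_ ?_⟩
    · rintro _ ⟨hy, x', rfl⟩
      obtain ⟨x, hx, hxx'⟩ := mem_iUnion₂.1 hy
      obtain ⟨w, hw, hφw⟩ := hNU x hx ⟨interior_subset hxx', -x + x', by simp⟩
      exact ⟨x + w, hw, by rw [map_add, hφw, add_neg_cancel_left]⟩
    · rintro _ ⟨x, hx, rfl⟩
      refine ⟨mem_biUnion hx ?_, x, rfl⟩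
      simpa using mem_interior_iff_mem_nhds.2 (hN x hx)

end StrictHom

section HalvingBasis

variable {G : Type*} [AddGroup G]

theorem neg_add_mem_of_neg_add_succ_mem {V : ℕ → Set G} (hV0 : ∀ n, (0 : G) ∈ V n)
    (hV : ∀ n, V (n + 1) + V (n + 1) ⊆ V n) {v : ℕ → G}
    (hv : ∀ n, -v n + v (n + 1) ∈ V (n + 1)) (n k : ℕ) : -v n + v (n + k) ∈ V n := by
  induction k generalizing n with
  | zero => simpa using hV0 n
  | succ k ih =>
    have hsum := hV n (add_mem_add (hv n) (ih (n + 1)))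
    rwa [add_assoc, add_neg_cancel_left, add_right_comm] at hsum

variable [TopologicalSpace G] [ContinuousAdd G]

theorem exists_hasBasis_nhds_zero_add_subset [FirstCountableTopology G] {U : Set G}
    (hU : U ∈ 𝓝 (0 : G)) :
    ∃ V : ℕ → Set G, (𝓝 (0 : G)).HasBasis (fun _ => True) V ∧
      (∀ n, V (n + 1) + V (n + 1) ⊆ V n) ∧ V 0 = U := by
  obtain ⟨t, ht⟩ := (𝓝 (0 : G)).exists_antitone_basis
  choose half half_mem half_add using
    fun s : {s : Set G // s ∈ 𝓝 (0 : G)} => exists_nhds_zero_half s.2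
  let W : ℕ → {s : Set G // s ∈ 𝓝 (0 : G)} := fun n => Nat.rec ⟨U, hU⟩
    (fun n s => ⟨half ⟨s.1 ∩ t (n + 1), inter_mem s.2 (ht.mem _)⟩, half_mem _⟩) n
  have hW : ∀ n, (W (n + 1)).1 + (W (n + 1)).1 ⊆ (W n).1 ∩ t (n + 1) := by
    rintro n _ ⟨a, ha, b, hb, rfl⟩
    exact half_add _ a ha b hb
  have hWt : ∀ n, (W (n + 1)).1 ⊆ t (n + 1) := fun n a ha => by
    simpa using (hW n (add_mem_add ha (mem_of_mem_nhds (W (n + 1)).2))).2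
  refine ⟨fun n => (W n).1, ht.toHasBasis.to_hasBasis' (fun n _ => ⟨n + 1, trivial,
    (hWt n).trans (ht.antitone n.le_succ)⟩) (fun n _ => (W n).2),
    fun n => (hW n).trans inter_subset_left, rfl⟩

end HalvingBasis

section Completion

variable {G H : Type*} [AddGroup G] [UniformSpace G] [IsUniformAddGroup G]
  [AddGroup H] [UniformSpace H] [IsUniformAddGroup H] {f : G →+ H}

theorem cauchySeq_of_neg_add_succ_mem {V : ℕ → Set G}
    (hV : (𝓝 (0 : G)).HasBasis (fun _ => True) V)
    (hV2 : ∀ n, V (n + 1) + V (n + 1) ⊆ V n) {v : ℕ → G}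
    (hv : ∀ n, -v n + v (n + 1) ∈ V (n + 1)) : CauchySeq v := by
  have hV0 : ∀ n, (0 : G) ∈ V n := fun n => mem_of_mem_nhds (hV.mem_of_mem trivial)
  have hanti : Antitone V := antitone_nat_of_succ_le fun n x hx => by
    simpa using hV2 n (add_mem_add hx (hV0 (n + 1)))
  have htel := neg_add_mem_of_neg_add_succ_mem hV0 hV2 hv
  rw [cauchySeq_iff]
  intro s hs
  rw [uniformity_eq_comap_neg_add_nhds_zero] at hs
  obtain ⟨W, hW, hWs⟩ := hs
  obtain ⟨N, -, hN⟩ := hV.mem_iff.1 (inter_mem hW (neg_mem_nhds_zero G hW))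
  refine ⟨N, fun k hk l hl => hWs ?_⟩
  rcases le_total k l with hkl | hlk
  · obtain ⟨d, rfl⟩ := Nat.exists_eq_add_of_le hkl
    exact (hN (hanti hk (htel k d))).1
  · obtain ⟨d, rfl⟩ := Nat.exists_eq_add_of_le hlk
    simpa using (hN (hanti hl (htel l d))).2

theorem IsStrictHom.exists_cauchySeq_lift [FirstCountableTopology G] (hf : IsStrictHom f)
    {U : Set G} (hU : U ∈ 𝓝 (0 : G)) {u : ℕ → G} (hu : CauchySeq (f ∘ u)) :
    ∃ (φ : ℕ → ℕ) (v : ℕ → G), StrictMono φ ∧ CauchySeq v ∧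
      (∀ n, f (v n) = f (u (φ n))) ∧ ∀ n, -u (φ 0) + v n ∈ U := by
  obtain ⟨V, hV, hV2, rfl⟩ := exists_hasBasis_nhds_zero_add_subset hU
  choose N hN hNV using fun n =>
    ((isStrictHom_iff_nhds_zero f).1 hf).2 (V (n + 1)) (hV.mem_of_mem trivial)
  obtain ⟨φ, hφ, hφN⟩ := hu.subseq_mem (V := fun n => {p : H × H | -p.2 + p.1 ∈ N n})
    fun n => by
      rw [uniformity_eq_comap_neg_add_nhds_zero_swapped]
      exact preimage_mem_comap (hN n)
  have hdiff : ∀ n, -f (u (φ n)) + f (u (φ (n + 1))) ∈ N n ∩ range f := fun n =>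
    ⟨hφN n, -u (φ n) + u (φ (n + 1)), by simp⟩
  choose w hwV hfw using fun n => hNV n (hdiff n)
  let v : ℕ → G := fun n => Nat.rec (u (φ 0)) (fun n x => x + w n) n
  have hv : ∀ n, -v n + v (n + 1) ∈ V (n + 1) := fun n => by
    simpa [v] using hwV n
  have hfv : ∀ n, f (v n) = f (u (φ n)) := by
    intro n
    induction n with
    | zero => rfl
    | succ n ih =>
      change f (v n + w n) = _
      rw [map_add, ih, hfw, add_neg_cancel_left]
  refine ⟨φ, v, hφ, cauchySeq_of_neg_add_succ_mem hV hV2 hv, hfv, fun n => ?_⟩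
  have hV0 : ∀ n, (0 : G) ∈ V n := fun n => mem_of_mem_nhds (hV.mem_of_mem trivial)
  simpa [v] using neg_add_mem_of_neg_add_succ_mem hV0 hV2 hv 0 n

instance UniformSpace.Completion.firstCountableTopology [FirstCountableTopology H] :
    FirstCountableTopology (Completion H) := by
  have : (𝓝 (0 : Completion H)).IsCountablyGenerated := by
    obtain ⟨t, ht⟩ := (𝓝 (0 : H)).exists_antitone_basis
    have := (ht.toHasBasis.hasBasis_of_isDenseInducing
      Completion.isDenseInducing_coe).isCountablyGenerated
    rwa [Completion.coe_zero] at this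
  have := IsUniformAddGroup.uniformity_countably_generated (α := Completion H)
  infer_instance

theorem IsStrictHom.exists_completion_map_eq [FirstCountableTopology G]
    [FirstCountableTopology H] (hf : IsStrictHom f) {S U : Set G} (hU : U ∈ 𝓝 (0 : G))
    {y : Completion H} (hy : y ∈ closure ((fun g => (f g : Completion H)) '' S)) :
    ∃ x, Completion.map f x = y ∧ x ∈ closure (((↑) : G → Completion G) '' (S + U)) := by
  have huc : UniformContinuous f := uniformContinuous_addMonoidHom_of_continuous hf.1
  obtain ⟨z, hzS, hzy⟩ := mem_closure_iff_seq_limit.1 hy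
  choose u huS hfu using hzS
  rw [← funext hfu] at hzy
  have hcauchy : CauchySeq (f ∘ u) := by
    refine (Completion.isUniformInducing_coe H).cauchy_map_iff.1 ?_
    rw [Filter.map_map]
    exact hzy.cauchySeq
  obtain ⟨φ, v, hφ, hv, hfv, hvU⟩ := hf.exists_cauchySeq_lift hU hcauchy
  obtain ⟨x, hx⟩ := cauchySeq_tendsto_of_complete
    ((Completion.uniformContinuous_coe G).comp_cauchySeq hv)
  refine ⟨x, tendsto_nhds_unique ?_ (hzy.comp hφ.tendsto_atTop),
    mem_closure_of_tendsto hx (Eventually.of_forall fun n => mem_image_of_mem _ ?_)⟩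
  · simpa [Function.comp_def, Completion.map_coe huc, hfv] using
      ((Completion.continuous_map (f := f)).tendsto x).comp hx
  · simpa using add_mem_add (huS (φ 0)) (hvU n)

theorem IsStrictHom.exists_nhds_zero_completion_lift (hf : IsStrictHom f)
    {W : Set (Completion G)} (hW : W ∈ 𝓝 0) :
    ∃ O ∈ 𝓝 (0 : Completion H),
      ∀ g : G, (f g : Completion H) ∈ O → ∃ u : G, (u : Completion G) ∈ W ∧ f u = f g := by
  have hU : (↑) ⁻¹' W ∈ 𝓝 (0 : G) := (Completion.continuous_coe G).continuousAt.preimage_mem_nhds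
    (by rwa [Completion.coe_zero])
  obtain ⟨V, hV, hVU⟩ := ((isStrictHom_iff_nhds_zero f).1 hf).2 _ hU
  rw [Completion.isDenseInducing_coe.isInducing.nhds_eq_comap, Completion.coe_zero] at hV
  obtain ⟨O, hO, hOV⟩ := hV
  exact ⟨O, hO, fun g hg => hVU ⟨hOV hg, g, rfl⟩⟩

theorem IsStrictHom.range_completion_map [FirstCountableTopology G] [FirstCountableTopology H]
    (hf : IsStrictHom f) :
    range (Completion.map f) = closure (range fun g => (f g : Completion H)) := by
  have huc : UniformContinuous f := uniformContinuous_addMonoidHom_of_continuous hf.1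
  refine subset_antisymm ?_ fun y hy => ?_
  · refine (Completion.continuous_map.range_subset_closure_image_dense
      Completion.denseRange_coe).trans (closure_mono ?_)
    rintro _ ⟨_, ⟨g, rfl⟩, rfl⟩
    exact ⟨g, (Completion.map_coe huc g).symm⟩
  · obtain ⟨x, hx, -⟩ := hf.exists_completion_map_eq (S := univ) univ_mem (by rwa [image_univ])
    exact ⟨x, hx⟩

theorem IsStrictHom.ker_completion_map (hf : IsStrictHom f) :
    {x | Completion.map f x = 0} = closure (((↑) : G → Completion G) '' {g | f g = 0}) := by
  have huc : UniformContinuous f := uniformContinuous_addMonoidHom_of_continuous hf.1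
  refine subset_antisymm (fun x hx => mem_closure_iff_nhds.2 fun N hN => ?_)
    (closure_minimal ?_ (isClosed_singleton.preimage Completion.continuous_map))
  · have hN0 : (x + ·) ⁻¹' N ∈ 𝓝 (0 : Completion G) :=
      (continuous_const.add continuous_id).continuousAt.preimage_mem_nhds (by simpa using hN)
    obtain ⟨W, hW, hWN⟩ := exists_nhds_half_neg hN0
    obtain ⟨O, hO, hOW⟩ := hf.exists_nhds_zero_completion_lift hW
    have hx' : {z | -x + z ∈ W ∧ Completion.map f z ∈ O} ∈ 𝓝 x :=
      inter_mem ((continuous_const.add continuous_id).continuousAt.preimage_mem_nhds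
        (by simpa using hW)) (Completion.continuous_map.continuousAt.preimage_mem_nhds
        (by rw [show Completion.map f x = 0 from hx]; exact hO))
    obtain ⟨_, ⟨hgW, hgV⟩, g, rfl⟩ := mem_closure_iff_nhds.1 (Completion.denseRange_coe x) _ hx'
    obtain ⟨u, hu, hfu⟩ := hOW g (by simpa [Completion.map_coe huc] using hgV)
    refine ⟨((g - u : G) : Completion G), ?_, g - u, by simp [hfu], rfl⟩
    simpa [sub_eq_add_neg, add_assoc, Completion.coe_add, Completion.coe_neg] using
      hWN _ hgW _ hu
  · rintro _ ⟨g, hg, rfl⟩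
    simp [Completion.map_coe huc, show f g = 0 from hg, Completion.coe_zero]

theorem IsStrictHom.exists_nhds_zero_inter_range_completion_map_subset
    [FirstCountableTopology G] [FirstCountableTopology H] (hf : IsStrictHom f)
    {W : Set (Completion G)} (hW : W ∈ 𝓝 0) :
    ∃ O ∈ 𝓝 (0 : Completion H), O ∩ range (Completion.map f) ⊆ Completion.map f '' W := by
  obtain ⟨K, hK, hKc, hKW⟩ := exists_mem_nhds_isClosed_subset hW
  obtain ⟨W₁, hW₁, hW₁K⟩ := exists_nhds_zero_half hK
  have hU : (↑) ⁻¹' W₁ ∈ 𝓝 (0 : G) := (Completion.continuous_coe G).continuousAt.preimage_mem_nhds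
    (by rwa [Completion.coe_zero])
  obtain ⟨O, hO, hOW⟩ := hf.exists_nhds_zero_completion_lift hW₁
  refine ⟨interior O, interior_mem_nhds.2 hO, ?_⟩
  rintro _ ⟨hyO, x₀, rfl⟩
  have hy : Completion.map f x₀ ∈ closure ((fun g => (f g : Completion H)) '' ((↑) ⁻¹' W₁)) := by
    refine closure_mono ?_ (isOpen_interior.inter_closure
      ⟨hyO, hf.range_completion_map ▸ mem_range_self x₀⟩)
    rintro _ ⟨hzO, g, rfl⟩
    obtain ⟨u, hu, hfu⟩ := hOW g (interior_subset hzO)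
    exact ⟨u, hu, by simp only [hfu]⟩
  obtain ⟨x, hx, hxK⟩ := hf.exists_completion_map_eq hU hy
  refine ⟨x, hKW (hKc.closure_subset_iff.2 ?_ hxK), hx⟩
  rintro _ ⟨_, ⟨a, ha, b, hb, rfl⟩, rfl⟩
  rw [Completion.coe_add]
  exact hW₁K _ ha _ hb

end Completion

/-- Let `G`, `H` be metrizable topological groups with completions `Ĝ`, `Ĥ`, and let
`f : G → H` be a strict continuous homomorphism.  Then the unique continuous extension
`f̂ : Ĝ → Ĥ` is strict, with kernel the closure of `ker f` and image the closure of `im f`. -/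
theorem strict_completion_map {G H : Type*} [AddGroup G] [UniformSpace G] [IsUniformAddGroup G]
    [AddGroup H] [UniformSpace H] [IsUniformAddGroup H]
    [TopologicalSpace.PseudoMetrizableSpace G] [TopologicalSpace.PseudoMetrizableSpace H]
    (f : G →+ H) (hstrict : IsStrictHom ⇑f) :
    IsStrictHom (Completion.map ⇑f) ∧
      {x : Completion G | Completion.map ⇑f x = 0} =
        closure ((fun g : G => (g : Completion G)) '' {g : G | f g = 0}) ∧
      Set.range (Completion.map ⇑f) =
        closure (Set.range fun g : G => ((f g : H) : Completion H)) :=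
  ⟨(isStrictHom_iff_nhds_zero (f.completion hstrict.1)).2 ⟨f.continuous_completion hstrict.1,
    fun _ => hstrict.exists_nhds_zero_inter_range_completion_map_subset⟩,
    hstrict.ker_completion_map, hstrict.range_completion_map⟩
end

section
/- Let G and H be Hausdorff abelian topological groups and f : G → H a continuous homomorphism. If the restriction of f to a dense subgroup D of G is strict (as a map D → f(D)), then f itself is strict. -/
open Set Topology

theorem isStrictHom_iff_nhds {X Y : Type*} [TopologicalSpace X] [TopologicalSpace Y]
    {f : X → Y} :
    IsStrictHom f ↔
      Continuous f ∧ ∀ x, ∀ U ∈ 𝓝 x, ∃ V ∈ 𝓝 (f x), V ∩ range f ⊆ f '' U := by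
  refine ⟨fun ⟨hf, hopen⟩ => ⟨hf, fun x U hU => ?_⟩, fun ⟨hf, hloc⟩ => ⟨hf, fun U hU => ?_⟩⟩
  · obtain ⟨U', hU'U, hU'o, hxU'⟩ := mem_nhds_iff.1 hU
    obtain ⟨V, hVo, hVU'⟩ := hopen U' hU'o
    have hxV : f x ∈ V := (hVU'.symm ▸ mem_image_of_mem f hxU' : f x ∈ V ∩ range f).1
    exact ⟨V, hVo.mem_nhds hxV, hVU'.trans_subset (image_mono hU'U)⟩
  · choose! V hV hVU using fun x (hx : x ∈ U) => hloc x U (hU.mem_nhds hx)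
    refine ⟨⋃ x ∈ U, interior (V x), isOpen_biUnion fun _ _ => isOpen_interior, ?_⟩
    apply Subset.antisymm
    · rintro y ⟨hy, hyr⟩
      obtain ⟨x, hx, hyx⟩ := mem_iUnion₂.1 hy
      exact hVU x hx ⟨interior_subset hyx, hyr⟩
    · rintro _ ⟨x, hx, rfl⟩
      exact ⟨mem_biUnion hx (mem_interior_iff_mem_nhds.2 (hV x hx)), mem_range_self x⟩

theorem AddMonoidHom.isStrictHom_of_nhds_zero {G H : Type*}
    [TopologicalSpace G] [AddGroup G] [IsTopologicalAddGroup G]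
    [TopologicalSpace H] [AddGroup H] [IsTopologicalAddGroup H]
    (f : G →+ H) (hf : Continuous f)
    (h : ∀ U ∈ 𝓝 (0 : G), ∃ V ∈ 𝓝 (0 : H), V ∩ range f ⊆ f '' U) : IsStrictHom f := by
  refine isStrictHom_iff_nhds.2 ⟨hf, fun x U hU => ?_⟩
  obtain ⟨V, hV, hVU⟩ := h ((· + x) ⁻¹' U)
    ((continuous_add_const x).continuousAt.preimage_mem_nhds (by rwa [zero_add]))
  refine ⟨(· - f x) ⁻¹' V,
    (continuous_sub_right (f x)).continuousAt.preimage_mem_nhds (by rwa [sub_self]), ?_⟩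
  rintro _ ⟨hg, g, rfl⟩
  obtain ⟨w, hwU, hw⟩ := hVU ⟨hg, g - x, map_sub f g x⟩
  exact ⟨w + x, hwU, by rw [map_add, hw, sub_add_cancel]⟩

theorem exists_nhds_zero_inter_range_subset_of_dense {G H : Type*}
    [TopologicalSpace G] [AddCommGroup G] [IsTopologicalAddGroup G]
    [TopologicalSpace H] [AddCommGroup H]
    (f : G →+ H) (hf : Continuous f) {D : AddSubgroup G} (hD : Dense (D : Set G))
    (hDf : IsStrictHom fun d : D => f d) {U : Set G} (hU : U ∈ 𝓝 (0 : G)) :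
    ∃ V ∈ 𝓝 (0 : H), V ∩ range f ⊆ f '' U := by
  obtain ⟨W, hW, hWU⟩ := exists_nhds_half_neg hU
  obtain ⟨V, hV, hVW⟩ := (isStrictHom_iff_nhds.1 hDf).2 0 (Subtype.val ⁻¹' W)
    (continuous_subtype_val.continuousAt.preimage_mem_nhds hW)
  obtain ⟨V', hV'V, hV'o, hV'0⟩ := mem_nhds_iff.1 hV
  refine ⟨V', hV'o.mem_nhds (by simpa using hV'0), ?_⟩
  rintro _ ⟨hgV, g, rfl⟩
  have hnear : f ⁻¹' V' ∩ (· - g) ⁻¹' W ∈ 𝓝 g :=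
    Filter.inter_mem (hf.continuousAt.preimage_mem_nhds (hV'o.mem_nhds hgV))
      ((continuous_sub_right g).continuousAt.preimage_mem_nhds (by rwa [sub_self]))
  obtain ⟨d, hdD, hdV, hdW⟩ := hD.inter_nhds_nonempty hnear
  obtain ⟨w, hwW, hw⟩ := hVW ⟨hV'V hdV, ⟨d, hdD⟩, rfl⟩
  refine ⟨w - (d - g), hWU _ hwW _ hdW, ?_⟩
  simp only [map_sub, hw, sub_sub_cancel]

theorem strict_of_denseRestriction_general {G H : Type*}
    [TopologicalSpace G] [AddCommGroup G] [IsTopologicalAddGroup G]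
    [TopologicalSpace H] [AddCommGroup H] [IsTopologicalAddGroup H]
    (f : G →+ H) (hf : Continuous f) (D : AddSubgroup G) (hD : Dense (D : Set G))
    (hstrict : IsStrictHom fun d : D => f d) :
    IsStrictHom ⇑f :=
  f.isStrictHom_of_nhds_zero hf fun _ hU =>
    exists_nhds_zero_inter_range_subset_of_dense f hf hD hstrict hU

/-- Let `G`, `H` be Hausdorff abelian topological groups and `f : G → H` a continuous
homomorphism.  If the restriction of `f` to a dense subgroup `D ⊆ G` is strict (as a map
`D → f(D)`), then `f` itself is strict. -/
theorem strict_of_denseRestriction {G H : Type*}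
    [TopologicalSpace G] [AddCommGroup G] [IsTopologicalAddGroup G] [T2Space G]
    [TopologicalSpace H] [AddCommGroup H] [IsTopologicalAddGroup H] [T2Space H]
    (f : G →+ H) (hf : Continuous f) (D : AddSubgroup G) (hD : Dense (D : Set G))
    (hstrict : IsStrictHom fun d : D => f d) :
    IsStrictHom ⇑f :=
  strict_of_denseRestriction_general f hf D hD hstrict
end

section
/- Let R be a ring, M a finitely presented R-module, and (N_n)_{n∈ℕ} a countable inverse system of flat R-modules satisfying the Mittag-Leffler condition. Then the natural map M ⊗_R (lim_n N_n) → lim_n (M ⊗_R N_n) is an isomorphism. -/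
open TensorProduct

/-- The inverse limit of an inverse system of `R`-modules indexed by `ℕ`, as a submodule of
the product. -/
def invLim (R : Type*) [CommRing R] (N : ℕ → Type*) [∀ n, AddCommGroup (N n)]
    [∀ n, Module R (N n)] (t : ∀ n, N (n + 1) →ₗ[R] N n) : Submodule R (∀ n, N n) where
  carrier := {x | ∀ n, t n (x (n + 1)) = x n}
  add_mem' := by
    intro a b ha hb n
    simp only [Set.mem_setOf_eq] at ha hb
    simp [ha n, hb n]
  zero_mem' := by intro n; simp
  smul_mem' := by
    intro c a ha n
    simp only [Set.mem_setOf_eq] at ha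
    simp [ha n]

/-- The natural map `M ⊗ lim Nₙ → lim (M ⊗ Nₙ)`, sending `m ⊗ (xₙ)ₙ` to `(m ⊗ xₙ)ₙ`. -/
noncomputable def natTensorLimMap (R : Type*) [CommRing R] (M : Type*) [AddCommGroup M]
    [Module R M] (N : ℕ → Type*) [∀ n, AddCommGroup (N n)] [∀ n, Module R (N n)]
    (t : ∀ n, N (n + 1) →ₗ[R] N n) :
    M ⊗[R] (invLim R N t) →ₗ[R]
      invLim R (fun n => M ⊗[R] N n) (fun n => LinearMap.lTensor M (t n)) :=
  TensorProduct.lift <| LinearMap.mk₂ R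
    (fun m x => ⟨fun n => m ⊗ₜ[R] (x : ∀ n, N n) n, by
      intro n
      show LinearMap.lTensor M (t n) (m ⊗ₜ[R] (x : ∀ n, N n) (n + 1)) = m ⊗ₜ[R] (x : ∀ n, N n) n
      rw [LinearMap.lTensor_tmul, x.2 n]⟩)
    (fun m₁ m₂ x => Subtype.ext (funext fun n => add_tmul m₁ m₂ _))
    (fun c m x => Subtype.ext (funext fun n => (smul_tmul' c m _).symm))
    (fun m x y => Subtype.ext (funext fun n => tmul_add m _ _))
    (fun c m x => Subtype.ext (funext fun n => tmul_smul c m _))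

/-- The composite transition map `N (n+k) → N n` of the inverse system. -/
def downMap {R : Type*} [CommRing R] (N : ℕ → Type*) [∀ n, AddCommGroup (N n)]
    [∀ n, Module R (N n)] (t : ∀ n, N (n + 1) →ₗ[R] N n) (n : ℕ) :
    ∀ k : ℕ, N (n + k) →ₗ[R] N n
  | 0 => LinearMap.id
  | k + 1 => (downMap N t n k).comp (t (n + k))

/-!
Present `M` as `Rᵇ → M → 0` with finitely generated kernel `K`. For `Rᵇ` the map is an
isomorphism, tensoring with `Rᵇ` being a finite product. Tensoring the presentation with `Nₙ`
gives exact sequences `K ⊗ Nₙ → Rᵇ ⊗ Nₙ → M ⊗ Nₙ → 0` in which the system `K ⊗ Nₙ` is again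
Mittag-Leffler; its `lim¹` vanishes, so `lim (Rᵇ ⊗ Nₙ) → lim (M ⊗ Nₙ)` is onto, which gives
surjectivity for every finite `M`. For injectivity, flatness makes `K ⊗ Nₙ → Rᵇ ⊗ Nₙ` injective,
so an element of the kernel comes from `lim (K ⊗ Nₙ)`, hence (surjectivity for `K`) from
`K ⊗ lim Nₙ`, and dies in `M ⊗ lim Nₙ`.
-/

section InverseSystem

variable {R : Type*} [CommRing R] {A : ℕ → Type*} [∀ n, AddCommGroup (A n)]
  [∀ n, Module R (A n)] (τ : ∀ n, A (n + 1) →ₗ[R] A n)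

def IsMittagLeffler : Prop :=
  ∀ n, ∃ k₀, ∀ k, k₀ ≤ k →
    LinearMap.range (downMap A τ n k) = LinearMap.range (downMap A τ n k₀)

-- Stated for a family `c` so that the indices `n + 1 + j` and `n + (j + 1)` need no cast.
lemma apply_downMap_eq_downMap_succ (c : ∀ m, A m) (n j : ℕ) :
    τ n (downMap A τ (n + 1) j (c (n + 1 + j))) = downMap A τ n (j + 1) (c (n + (j + 1))) := by
  induction j generalizing c with
  | zero => rfl
  | succ j ih => exact ih fun m => τ m (c (m + 1))

lemma range_downMap_succ (n k : ℕ) :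
    LinearMap.range (downMap A τ n (k + 1))
      = (LinearMap.range (downMap A τ (n + 1) k)).map (τ n) := by
  ext x
  simp only [LinearMap.mem_range, Submodule.mem_map]
  constructor
  · rintro ⟨y, rfl⟩
    obtain ⟨c, rfl⟩ := Function.surjective_eval (n + (k + 1)) y
    exact ⟨_, ⟨c (n + 1 + k), rfl⟩, apply_downMap_eq_downMap_succ τ c n k⟩
  · rintro ⟨_, ⟨y, rfl⟩, rfl⟩
    obtain ⟨c, rfl⟩ := Function.surjective_eval (n + 1 + k) y
    exact ⟨_, (apply_downMap_eq_downMap_succ τ c n k).symm⟩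

variable {τ}

lemma IsMittagLeffler.exists_monotone (h : IsMittagLeffler τ) :
    ∃ k₀ : ℕ → ℕ, Monotone k₀ ∧ ∀ n k, k₀ n ≤ k →
      LinearMap.range (downMap A τ n k) = LinearMap.range (downMap A τ n (k₀ n)) := by
  choose k₀ hk₀ using h
  refine ⟨fun n => (Finset.range (n + 1)).sup k₀, fun m n hmn => ?_, fun n k hk => ?_⟩
  · exact Finset.sup_mono (Finset.range_subset_range.2 (by omega))
  · have hle : k₀ n ≤ (Finset.range (n + 1)).sup k₀ :=
      Finset.le_sup (f := k₀) (Finset.self_mem_range_succ n)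
    rw [hk₀ n k (hle.trans hk), hk₀ n _ hle]

lemma exists_sub_eq_of_le_map {P : ∀ n, Submodule R (A n)} (hP : ∀ n, P n ≤ (P (n + 1)).map (τ n))
    (r : ∀ n, A n) (hr : ∀ n, r n ∈ P n) :
    ∃ v : ∀ n, A n, ∀ n, v n - τ n (v (n + 1)) = r n := by
  have hlift : ∀ n (a : P n), ∃ b : P (n + 1), τ n b = a - r n := fun n a => by
    obtain ⟨b, hb, hτb⟩ := hP n (sub_mem a.2 (hr n))
    exact ⟨⟨b, hb⟩, hτb⟩
  choose lift hlift using hlift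
  let V : ∀ n, P n := fun n => Nat.rec (motive := fun n => P n) 0 lift n
  exact ⟨fun n => V n, fun n => by
    show (V n : A n) - τ n (lift n (V n)) = r n
    rw [hlift, sub_sub_cancel]⟩

theorem IsMittagLeffler.exists_sub_eq (h : IsMittagLeffler τ) (c : ∀ n, A n) :
    ∃ w : ∀ n, A n, ∀ n, w n - τ n (w (n + 1)) = c n := by
  -- Truncated telescoping sums solve the equation up to an error in the stable images `E n`,
  -- whose transition maps are onto.
  obtain ⟨k₀, hmono, hk₀⟩ := h.exists_monotone
  let E n := LinearMap.range (downMap A τ n (k₀ n))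
  have hE : ∀ n, E n ≤ (E (n + 1)).map (τ n) := fun n => by
    rw [← range_downMap_succ, hk₀ n _ ((hmono n.le_succ).trans (k₀ (n + 1)).le_succ)]
  let D : ∀ n, ℕ → A n := fun n i => downMap A τ n i (c (n + i))
  have hD : ∀ n i, k₀ n ≤ i → D n i ∈ E n := fun n i hi =>
    (hk₀ n i hi).le (LinearMap.mem_range_self _ _)
  let w' : ∀ n, A n := fun n => ∑ i ∈ Finset.range (k₀ n + 1), D n i
  have hτw' : ∀ n, τ n (w' (n + 1)) = ∑ i ∈ Finset.range (k₀ (n + 1) + 1), D n (i + 1) :=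
    fun n => by
      simp only [w', map_sum]
      exact Finset.sum_congr rfl fun i _ => apply_downMap_eq_downMap_succ τ c n i
  have hdefect : ∀ n, c n - (w' n - τ n (w' (n + 1))) ∈ E n := by
    intro n
    have hle : k₀ n ≤ k₀ (n + 1) + 1 := (hmono n.le_succ).trans (k₀ (n + 1)).le_succ
    have : c n - (w' n - τ n (w' (n + 1)))
        = ∑ i ∈ Finset.Ico (k₀ n) (k₀ (n + 1) + 1), D n (i + 1) := by
      rw [hτw', ← Finset.sum_range_add_sum_Ico _ hle]
      simp only [w', Finset.sum_range_succ']
      change c n - (_ + c n - _) = _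
      abel
    rw [this]
    exact Submodule.sum_mem _ fun i hi => hD n _ (by simp only [Finset.mem_Ico] at hi; omega)
  obtain ⟨v, hv⟩ := exists_sub_eq_of_le_map hE _ hdefect
  refine ⟨w' + v, fun n => ?_⟩
  simp only [Pi.add_apply, map_add]
  rw [← sub_eq_zero, ← sub_eq_zero.2 (hv n)]
  abel

theorem exists_invLim_lift_of_exact {C B : ℕ → Type*} [∀ n, AddCommGroup (C n)]
    [∀ n, Module R (C n)] [∀ n, AddCommGroup (B n)] [∀ n, Module R (B n)]
    {τC : ∀ n, C (n + 1) →ₗ[R] C n} {τB : ∀ n, B (n + 1) →ₗ[R] B n}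
    (q : ∀ n, C n →ₗ[R] A n) (p : ∀ n, A n →ₗ[R] B n)
    (hq : ∀ n x, q n (τC n x) = τ n (q (n + 1) x))
    (hp : ∀ n x, p n (τ n x) = τB n (p (n + 1) x))
    (hexact : ∀ n, Function.Exact (q n) (p n)) (hsurj : ∀ n, Function.Surjective (p n))
    (hC : IsMittagLeffler τC) {y : ∀ n, B n} (hy : y ∈ invLim R B τB) :
    ∃ x ∈ invLim R A τ, ∀ n, p n (x n) = y n := by
  choose z hz using fun n => hsurj n (y n)
  have hdefect : ∀ n, ∃ d, q n d = z n - τ n (z (n + 1)) := fun n =>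
    (hexact n _).1 (by rw [map_sub, hz, hp, hz, hy n, sub_self])
  choose d hd using hdefect
  obtain ⟨w, hw⟩ := hC.exists_sub_eq d
  refine ⟨fun n => z n - q n (w n), fun n => ?_, fun n => ?_⟩
  · change τ n (z (n + 1) - q (n + 1) (w (n + 1))) = z n - q n (w n)
    have hwn : w n = d n + τC n (w (n + 1)) := by rw [← hw n, sub_add_cancel]
    rw [hwn, map_add, hd, hq, map_sub]
    abel
  · rw [map_sub, hz, (hexact n).apply_apply_eq_zero, sub_zero]

lemma exists_invLim_preimage_of_injective {C : ℕ → Type*} [∀ n, AddCommGroup (C n)]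
    [∀ n, Module R (C n)] {τC : ∀ n, C (n + 1) →ₗ[R] C n} (q : ∀ n, C n →ₗ[R] A n)
    (hq : ∀ n x, q n (τC n x) = τ n (q (n + 1) x)) (hinj : ∀ n, Function.Injective (q n))
    {x : ∀ n, A n} (hx : x ∈ invLim R A τ) (hrange : ∀ n, x n ∈ LinearMap.range (q n)) :
    ∃ x' ∈ invLim R C τC, ∀ n, q n (x' n) = x n := by
  choose x' hx' using hrange
  exact ⟨x', fun n => hinj n (by rw [hq, hx', hx', hx n]), hx'⟩

end InverseSystem

section Tensor

variable {R : Type*} [CommRing R] {N : ℕ → Type*} [∀ n, AddCommGroup (N n)]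
  [∀ n, Module R (N n)] (t : ∀ n, N (n + 1) →ₗ[R] N n)

lemma downMap_lTensor (M : Type*) [AddCommGroup M] [Module R M] (n : ℕ) :
    ∀ k, downMap (fun n => M ⊗[R] N n) (fun n => (t n).lTensor M) n k
      = (downMap N t n k).lTensor M
  | 0 => (LinearMap.lTensor_id M _).symm
  | k + 1 => by
    rw [downMap, downMap_lTensor M n k, downMap, LinearMap.lTensor_comp]

variable {t}

theorem IsMittagLeffler.lTensor (h : IsMittagLeffler t) (M : Type*) [AddCommGroup M]
    [Module R M] : IsMittagLeffler (A := fun n => M ⊗[R] N n) fun n => (t n).lTensor M := by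
  intro n
  obtain ⟨k₀, hk₀⟩ := h n
  refine ⟨k₀, fun k hk => ?_⟩
  rw [downMap_lTensor, downMap_lTensor, LinearMap.lTensor_range, hk₀ k hk,
    ← LinearMap.lTensor_range]

lemma LinearMap.rTensor_lTensor_comm_apply {M P Q X : Type*} [AddCommGroup M] [Module R M]
    [AddCommGroup P] [Module R P] [AddCommGroup Q] [Module R Q] [AddCommGroup X] [Module R X]
    (f : M →ₗ[R] P) (g : X →ₗ[R] Q) (u : M ⊗[R] X) :
    f.rTensor Q (g.lTensor M u) = g.lTensor P (f.rTensor X u) := by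
  rw [← LinearMap.comp_apply, LinearMap.rTensor_comp_lTensor, ← LinearMap.lTensor_comp_rTensor,
    LinearMap.comp_apply]

variable (t) in
def invLimProj (n : ℕ) : invLim R N t →ₗ[R] N n :=
  LinearMap.proj n ∘ₗ (invLim R N t).subtype

lemma natTensorLimMap_apply (M : Type*) [AddCommGroup M] [Module R M]
    (u : M ⊗[R] invLim R N t) (n : ℕ) :
    (natTensorLimMap R M N t u : ∀ n, M ⊗[R] N n) n = (invLimProj t n).lTensor M u := by
  have : LinearMap.proj n ∘ₗ Submodule.subtype _ ∘ₗ natTensorLimMap R M N t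
      = (invLimProj t n).lTensor M := TensorProduct.ext' fun _ _ => rfl
  exact LinearMap.congr_fun this u

lemma natTensorLimMap_rTensor_apply {M₁ M₂ : Type*} [AddCommGroup M₁] [Module R M₁]
    [AddCommGroup M₂] [Module R M₂] (f : M₁ →ₗ[R] M₂) (u : M₁ ⊗[R] invLim R N t) (n : ℕ) :
    (natTensorLimMap R M₂ N t (f.rTensor _ u) : ∀ n, M₂ ⊗[R] N n) n
      = f.rTensor (N n) ((natTensorLimMap R M₁ N t u : ∀ n, M₁ ⊗[R] N n) n) := by
  rw [natTensorLimMap_apply, natTensorLimMap_apply, LinearMap.rTensor_lTensor_comm_apply]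

variable (R) in
noncomputable def piScalarLeft (ι : Type*) [Fintype ι] [DecidableEq ι] (X : Type*)
    [AddCommGroup X] [Module R X] : (ι → R) ⊗[R] X ≃ₗ[R] (ι → X) :=
  TensorProduct.comm R _ X ≪≫ₗ TensorProduct.piScalarRight R R X ι

section Free

variable {ι : Type*} [Fintype ι] [DecidableEq ι]

lemma piScalarLeft_lTensor {X Y : Type*} [AddCommGroup X] [Module R X] [AddCommGroup Y]
    [Module R Y] (g : X →ₗ[R] Y) (u : (ι → R) ⊗[R] X) (i : ι) :
    piScalarLeft R ι Y (g.lTensor _ u) i = g (piScalarLeft R ι X u i) := by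
  induction u with
  | zero => simp
  | tmul f x => simp [piScalarLeft]
  | add u v hu hv => simp only [map_add, Pi.add_apply, hu, hv]

lemma piScalarLeft_natTensorLimMap (u : (ι → R) ⊗[R] invLim R N t) (n : ℕ) (i : ι) :
    piScalarLeft R ι (N n) ((natTensorLimMap R (ι → R) N t u : ∀ n, (ι → R) ⊗[R] N n) n) i
      = (piScalarLeft R ι (invLim R N t) u i : ∀ n, N n) n := by
  rw [natTensorLimMap_apply, piScalarLeft_lTensor]
  rfl

theorem natTensorLimMap_pi_bijective : Function.Bijective (natTensorLimMap R (ι → R) N t) := by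
  refine ⟨(injective_iff_map_eq_zero _).2 fun u hu => ?_, fun y => ?_⟩
  · refine (piScalarLeft R ι _).map_eq_zero_iff.1 (funext fun i => Subtype.ext (funext fun n => ?_))
    rw [← piScalarLeft_natTensorLimMap, hu]
    simp
  · let x : ι → invLim R N t := fun i =>
      ⟨fun n => piScalarLeft R ι (N n) ((y : ∀ n, (ι → R) ⊗[R] N n) n) i, fun n => by
        change t n (piScalarLeft R ι _ (y.1 (n + 1)) i) = _
        rw [← piScalarLeft_lTensor, y.2 n]⟩
    refine ⟨(piScalarLeft R ι _).symm x, Subtype.ext (funext fun n => ?_)⟩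
    refine (piScalarLeft R ι (N n)).injective (funext fun i => ?_)
    rw [piScalarLeft_natTensorLimMap, LinearEquiv.apply_symm_apply]

end Free

section FinitePresentation

variable {M : Type*} [AddCommGroup M] [Module R M]

theorem natTensorLimMap_surjective (hML : IsMittagLeffler t) [Module.Finite R M] :
    Function.Surjective (natTensorLimMap R M N t) := by
  obtain ⟨b, g, hg⟩ := Module.Finite.exists_fin' R M
  intro y
  obtain ⟨x, hx, hxy⟩ := exists_invLim_lift_of_exact (C := fun n => LinearMap.ker g ⊗[R] N n)
    (fun n => (LinearMap.ker g).subtype.rTensor (N n)) (fun n => g.rTensor (N n))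
    (fun n => LinearMap.rTensor_lTensor_comm_apply _ (t n))
    (fun n => LinearMap.rTensor_lTensor_comm_apply _ (t n))
    (fun n => rTensor_exact (N n) g.exact_subtype_ker_map hg)
    (fun n => LinearMap.rTensor_surjective (N n) hg) (hML.lTensor (LinearMap.ker g)) y.2
  obtain ⟨u, hu⟩ := natTensorLimMap_pi_bijective.2 ⟨x, hx⟩
  refine ⟨g.rTensor _ u, Subtype.ext (funext fun n => ?_)⟩
  rw [natTensorLimMap_rTensor_apply, hu]
  exact hxy n

theorem natTensorLimMap_injective (hML : IsMittagLeffler t) (hflat : ∀ n, Module.Flat R (N n))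
    [Module.FinitePresentation R M] : Function.Injective (natTensorLimMap R M N t) := by
  obtain ⟨b, g, hg⟩ := Module.Finite.exists_fin' R M
  let K := LinearMap.ker g
  have : Module.Finite R K :=
    Module.Finite.iff_fg.2 (Module.FinitePresentation.fg_ker g hg)
  refine (injective_iff_map_eq_zero _).2 fun u hu => ?_
  obtain ⟨u', rfl⟩ := LinearMap.rTensor_surjective (invLim R N t) hg u
  set x := natTensorLimMap R (Fin b → R) N t u'
  have hx : ∀ n, x.1 n ∈ LinearMap.range (K.subtype.rTensor (N n)) := fun n => by
    rw [← (rTensor_exact (N n) g.exact_subtype_ker_map hg).linearMap_ker_eq, LinearMap.mem_ker,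
      ← natTensorLimMap_rTensor_apply, hu]
    rfl
  obtain ⟨x', hx', hxx'⟩ := exists_invLim_preimage_of_injective
    (C := fun n => K ⊗[R] N n) (fun n => K.subtype.rTensor (N n))
    (fun n => LinearMap.rTensor_lTensor_comm_apply _ (t n))
    (fun n => Module.Flat.rTensor_preserves_injective_linearMap _ K.injective_subtype) x.2 hx
  obtain ⟨w, hw⟩ := natTensorLimMap_surjective hML ⟨x', hx'⟩
  have hwu : K.subtype.rTensor _ w = u' := natTensorLimMap_pi_bijective.1 <|
    Subtype.ext (funext fun n => by rw [natTensorLimMap_rTensor_apply, hw]; exact hxx' n)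
  rw [← hwu, ← LinearMap.comp_apply, ← LinearMap.rTensor_comp, g.comp_ker_subtype,
    LinearMap.rTensor_zero, LinearMap.zero_apply]

end FinitePresentation

end Tensor

/-- Let `M` be a finitely presented `R`-module and `(Nₙ)` a countable inverse system of flat
`R`-modules satisfying the Mittag-Leffler condition.  Then the natural map
`M ⊗ (lim Nₙ) → lim (M ⊗ Nₙ)` is an isomorphism. -/
theorem tensor_commutes_with_lim_of_flat_mittagLeffler (R : Type*) [CommRing R]
    (M : Type*) [AddCommGroup M] [Module R M] (hfp : Module.FinitePresentation R M)
    (N : ℕ → Type*) [∀ n, AddCommGroup (N n)] [∀ n, Module R (N n)]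
    (t : ∀ n, N (n + 1) →ₗ[R] N n)
    (hflat : ∀ n, Module.Flat R (N n))
    (hML : ∀ n, ∃ k₀, ∀ k, k₀ ≤ k →
      LinearMap.range (downMap N t n k) = LinearMap.range (downMap N t n k₀)) :
    Function.Bijective (natTensorLimMap R M N t) :=
  ⟨natTensorLimMap_injective hML hflat, natTensorLimMap_surjective hML⟩
end
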